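/- arXiv:2010.10692 — 3 statements merged into one kernel-verified Lean document; each statement's English description precedes it below -/
import Mathlib

section
/- Let U ⊂ ℝⁿ be a bounded convex set and let u ∈ C⁴(Ū). Denote by λ₁(x) ≤ ⋯ ≤ λₙ(x) the eigenvalues of the Hessian D²u(x) in increasing order. Then for each k = 1, …, n the function Ū → ℝ given by x ↦ λ₁(x) + ⋯ + λ_k(x) is semi-concave, i.e. there exists M such that x ↦ λ₁(x) + ⋯ + λ_k(x) − M|x|² is concave on Ū. -/
open Metric

/-- The `i`-th partial derivative (0-based, junk value `0` if `i ≥ n`). -/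
noncomputable def pd {n : ℕ} (f : EuclideanSpace ℝ (Fin n) → ℝ)
    (x : EuclideanSpace ℝ (Fin n)) (i : ℕ) : ℝ :=
  if h : i < n then fderiv ℝ f x (EuclideanSpace.single ⟨i, h⟩ 1) else 0

/-- The Hessian matrix of second partial derivatives. -/
noncomputable def hessM {n : ℕ} (u : EuclideanSpace ℝ (Fin n) → ℝ)
    (x : EuclideanSpace ℝ (Fin n)) : Matrix (Fin n) (Fin n) ℝ :=
  Matrix.of fun i j => pd (fun y => pd u y (j : ℕ)) x (i : ℕ)

/-!
By Ky Fan's principle, `λ₁(x) + ⋯ + λ_k(x)` is the minimum over orthonormal `k`-frames `v` of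
`∑ₗ ⟪vₗ, D²u(x) vₗ⟫`. The lower bound is a rearrangement inequality: in an eigenbasis `eᵢ` the
weights `∑ₗ ⟪eᵢ, vₗ⟫²` lie in `[0, 1]` (Bessel) and add up to `k` (Parseval); the minimum is
attained at the eigenvectors of the `k` smallest eigenvalues.

For a fixed frame, `x ↦ ∑ₗ D²u(x)(vₗ, vₗ)` is a linear functional of norm at most `k` applied to
the `C²` map `D²u`, so its second derivative is bounded by `k · sup ‖D⁴u‖` on the compact set `Ū`.
Hence all these functions are semi-concave with one common constant, and so is their pointwise
minimum.
-/

open Finset Polynomial Filter Topology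
open scoped RealInnerProductSpace

theorem Monotone.eq_of_map_univ_eq {α : Type*} [LinearOrder α] {n : ℕ} {f g : Fin n → α}
    (hf : Monotone f) (hg : Monotone g) (h : univ.val.map f = univ.val.map g) : f = g := by
  rw [Fin.univ_val_map, Fin.univ_val_map, Multiset.coe_eq_coe] at h
  exact List.ofFn_injective (h.eq_of_sortedLE hf.sortedLE_ofFn hg.sortedLE_ofFn)

theorem exists_perm_comp_eq_of_map_univ_eq {α : Type*} [LinearOrder α] {n : ℕ} {f g : Fin n → α}
    (hf : Monotone f) (h : univ.val.map f = univ.val.map g) :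
    ∃ σ : Equiv.Perm (Fin n), g ∘ σ = f := by
  refine ⟨Tuple.sort g, (Tuple.monotone_sort g).eq_of_map_univ_eq hf ?_⟩
  rw [h, ← Multiset.map_map, Multiset.map_univ_val_equiv]

theorem Matrix.IsHermitian.exists_orthonormalBasis_toEuclideanLin_eq_smul {n : ℕ}
    {A : Matrix (Fin n) (Fin n) ℝ} (hA : A.IsHermitian) {lam : Fin n → ℝ} (hlam : Monotone lam)
    (hchar : A.charpoly = ∏ i, (X - C (lam i))) :
    ∃ e : OrthonormalBasis (Fin n) ℝ (EuclideanSpace ℝ (Fin n)),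
      ∀ i, A.toEuclideanLin (e i) = lam i • e i := by
  have hroots : univ.val.map lam = univ.val.map hA.eigenvalues := by
    have h := hA.roots_charpoly_eq_eigenvalues
    rw [hchar, roots_prod _ _ (by simp [Finset.prod_ne_zero_iff, X_sub_C_ne_zero])] at h
    simpa using h
  obtain ⟨σ, hσ⟩ := exists_perm_comp_eq_of_map_univ_eq hlam hroots
  refine ⟨hA.eigenvectorBasis.reindex σ.symm, fun i => ?_⟩
  rw [OrthonormalBasis.reindex_apply, Equiv.symm_symm, ← hσ]
  ext j
  simpa using congrFun (hA.mulVec_eigenvectorBasis (σ i)) j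

theorem sum_filter_lt_le_sum_mul {n k : ℕ} (hk : 1 ≤ k) (hkn : k ≤ n) {lam w : Fin n → ℝ}
    (hlam : Monotone lam) (hw0 : ∀ i, 0 ≤ w i) (hw1 : ∀ i, w i ≤ 1) (hw : ∑ i, w i = k) :
    ∑ i ∈ univ.filter (fun i : Fin n => (i : ℕ) < k), lam i ≤ ∑ i, lam i * w i := by
  set c := lam ⟨k - 1, by omega⟩
  set χ : Fin n → ℝ := fun i => if (i : ℕ) < k then 1 else 0
  -- With the threshold `c = lam (k - 1)`, every term of `∑ (lam i - c) * (w i - χ i)` is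
  -- nonnegative, and since `∑ w = ∑ χ = k` the sum is exactly the difference of the two sides.
  have hterm : ∀ i, 0 ≤ (lam i - c) * (w i - χ i) := by
    intro i
    by_cases hi : (i : ℕ) < k
    · have : lam i ≤ c := hlam (Fin.mk_le_mk.2 (by omega))
      exact mul_nonneg_of_nonpos_of_nonpos (by linarith) (by simp [χ, hi, hw1 i])
    · have : c ≤ lam i := hlam (Fin.mk_le_mk.2 (by omega))
      exact mul_nonneg (by linarith) (by simp [χ, hi, hw0 i])
  have hχ : ∑ i, χ i = k := by
    simp [χ, Finset.sum_boole, Fin.card_filter_val_lt, hkn]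
  have hsum : ∑ i ∈ univ.filter (fun i : Fin n => (i : ℕ) < k), lam i = ∑ i, lam i * χ i := by
    simp [χ, Finset.sum_filter]
  have := Finset.sum_nonneg fun i (_ : i ∈ univ) => hterm i
  simp only [mul_sub, sub_mul, Finset.sum_sub_distrib, ← Finset.mul_sum, hχ, hw] at this
  linarith

theorem Fin.sum_filter_val_lt {M : Type*} [AddCommMonoid M] {n k : ℕ} (hkn : k ≤ n)
    (f : Fin n → M) :
    ∑ i ∈ univ.filter (fun i : Fin n => (i : ℕ) < k), f i = ∑ l : Fin k, f (Fin.castLE hkn l) := by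
  refine Eq.trans ?_ (Finset.sum_map univ (Fin.castLEEmb hkn) f)
  congr 1
  ext i
  simp only [mem_filter, mem_univ, true_and, Finset.mem_map, Fin.castLEEmb_apply]
  exact ⟨fun hi => ⟨⟨i, hi⟩, rfl⟩, by rintro ⟨l, rfl⟩; exact l.isLt⟩

section KyFan

variable {E : Type*} [NormedAddCommGroup E] [InnerProductSpace ℝ E] {n k : ℕ}
  (e : OrthonormalBasis (Fin n) ℝ E) {T : E →ₗ[ℝ] E} {lam : Fin n → ℝ}

theorem inner_self_apply_eq_sum_mul_inner_sq (hT : ∀ i, T (e i) = lam i • e i) (v : E) :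
    ⟪v, T v⟫ = ∑ i, lam i * ⟪e i, v⟫ ^ 2 := by
  have hTv : T v = ∑ i, (lam i * ⟪e i, v⟫) • e i := by
    conv_lhs => rw [← e.sum_repr' v]
    simp [hT, smul_smul, mul_comm]
  rw [hTv, inner_sum]
  refine Finset.sum_congr rfl fun i _ => ?_
  rw [real_inner_smul_right, real_inner_comm]
  ring

theorem sum_filter_lt_le_sum_inner_self_apply (hT : ∀ i, T (e i) = lam i • e i)
    (hlam : Monotone lam) (hk : 1 ≤ k) (hkn : k ≤ n) {v : Fin k → E} (hv : Orthonormal ℝ v) :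
    ∑ i ∈ univ.filter (fun i : Fin n => (i : ℕ) < k), lam i ≤ ∑ l, ⟪v l, T (v l)⟫ := by
  have hbessel : ∀ i, ∑ l, ⟪e i, v l⟫ ^ 2 ≤ 1 := fun i => by
    simpa [real_inner_comm, e.orthonormal.1 i] using hv.sum_inner_products_le (e i) (s := univ)
  have hparseval : ∑ i, ∑ l, ⟪e i, v l⟫ ^ 2 = k := by
    simp [Finset.sum_comm (γ := Fin n), e.sum_sq_inner_right, hv.1]
  calc ∑ i ∈ univ.filter (fun i : Fin n => (i : ℕ) < k), lam i
      ≤ ∑ i, lam i * ∑ l, ⟪e i, v l⟫ ^ 2 :=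
        sum_filter_lt_le_sum_mul hk hkn hlam (fun i => by positivity) hbessel hparseval
    _ = ∑ l, ⟪v l, T (v l)⟫ := by
        simp_rw [inner_self_apply_eq_sum_mul_inner_sq e hT, Finset.mul_sum]
        exact Finset.sum_comm

theorem sum_inner_self_apply_castLE_eq (hT : ∀ i, T (e i) = lam i • e i) (hkn : k ≤ n) :
    ∑ l : Fin k, ⟪e (Fin.castLE hkn l), T (e (Fin.castLE hkn l))⟫ =
      ∑ i ∈ univ.filter (fun i : Fin n => (i : ℕ) < k), lam i := by
  simp [Fin.sum_filter_val_lt hkn, hT, real_inner_smul_right, e.orthonormal.1]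

end KyFan

theorem concaveOn_of_forall_le_of_exists_eq {ι E : Type*} [AddCommMonoid E] [Module ℝ E]
    {s : Set E} {f : ι → E → ℝ} {g : E → ℝ} (hs : Convex ℝ s) (hf : ∀ i, ConcaveOn ℝ s (f i))
    (hle : ∀ i, ∀ x ∈ s, g x ≤ f i x) (heq : ∀ x ∈ s, ∃ i, f i x = g x) : ConcaveOn ℝ s g := by
  refine ⟨hs, fun x hx y hy a b ha hb hab => ?_⟩
  obtain ⟨i, hi⟩ := heq _ (hs hx hy ha hb hab)
  calc a • g x + b • g y ≤ a • f i x + b • f i y := by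
        gcongr
        exacts [hle i x hx, hle i y hy]
    _ ≤ f i (a • x + b • y) := (hf i).2 hx hy ha hb hab
    _ = g (a • x + b • y) := hi

section Semiconcave

open Set

theorem norm_fderiv_fderiv_clm_comp_le {E V G : Type*} [NormedAddCommGroup E] [NormedSpace ℝ E]
    [NormedAddCommGroup V] [NormedSpace ℝ V] [NormedAddCommGroup G] [NormedSpace ℝ G]
    (L : V →L[ℝ] G) {F : E → V} {x : E}
    (hF : ∀ᶠ y in 𝓝 x, DifferentiableAt ℝ F y) (hF' : DifferentiableAt ℝ (fderiv ℝ F) x) :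
    ‖fderiv ℝ (fderiv ℝ (L ∘ F)) x‖ ≤ ‖L‖ * ‖fderiv ℝ (fderiv ℝ F) x‖ := by
  have hLF : fderiv ℝ (L ∘ F) =ᶠ[𝓝 x] ContinuousLinearMap.compL ℝ E V G L ∘ fderiv ℝ F :=
    hF.mono fun y hy => by rw [fderiv_comp y L.differentiableAt hy, L.fderiv]; rfl
  rw [hLF.fderiv_eq, fderiv_comp x (ContinuousLinearMap.differentiableAt _) hF',
    ContinuousLinearMap.fderiv]
  refine ContinuousLinearMap.opNorm_le_bound _ (by positivity) fun h => ?_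
  calc ‖L.comp (fderiv ℝ (fderiv ℝ F) x h)‖ ≤ ‖L‖ * ‖fderiv ℝ (fderiv ℝ F) x h‖ :=
        L.opNorm_comp_le _
    _ ≤ ‖L‖ * (‖fderiv ℝ (fderiv ℝ F) x‖ * ‖h‖) := by
        gcongr; exact ContinuousLinearMap.le_opNorm _ _
    _ = _ := (mul_assoc _ _ _).symm

variable {E : Type*} [NormedAddCommGroup E] [InnerProductSpace ℝ E]

theorem concaveOn_of_forall_concaveOn_lineMap {s : Set E} (hs : Convex ℝ s) {g : E → ℝ}
    (h : ∀ x ∈ s, ∀ y ∈ s, ConcaveOn ℝ (Icc (0 : ℝ) 1) (fun t => g (AffineMap.lineMap x y t))) :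
    ConcaveOn ℝ s g := by
  refine ⟨hs, fun x hx y hy a b ha hb hab => ?_⟩
  have h01 := (h x hx y hy).2 (left_mem_Icc.2 zero_le_one) (right_mem_Icc.2 zero_le_one) ha hb hab
  obtain rfl : a = 1 - b := by linarith
  simpa [AffineMap.lineMap_apply_module] using h01

theorem concaveOn_sub_half_mul_norm_sq {W s : Set E} {f : E → ℝ} {C : ℝ} (hW : IsOpen W)
    (hf : ContDiffOn ℝ 2 f W) (hs : Convex ℝ s) (hsW : s ⊆ W)
    (hC : ∀ x ∈ s, ‖fderiv ℝ (fderiv ℝ f) x‖ ≤ C) :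
    ConcaveOn ℝ s (fun x => f x - C / 2 * ‖x‖ ^ 2) := by
  have hf1 : ∀ x ∈ W, DifferentiableAt ℝ f x := fun x hx =>
    (hf.contDiffAt (hW.mem_nhds hx)).differentiableAt (by norm_num)
  have hf2 : ∀ x ∈ W, DifferentiableAt ℝ (fderiv ℝ f) x := fun x hx =>
    ((hf.contDiffAt (hW.mem_nhds hx)).fderiv_right (m := 1) (by norm_num)).differentiableAt
      (by norm_num)
  refine concaveOn_of_forall_concaveOn_lineMap hs fun x hx y hy => ?_
  set c := AffineMap.lineMap (k := ℝ) x y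
  have hc : ∀ t ∈ Icc (0 : ℝ) 1, c t ∈ s := fun t ht => hs.lineMap_mem hx hy ht
  have hc' : ∀ t, HasDerivAt c (y - x) t := fun t => AffineMap.hasDerivAt_lineMap
  refine concaveOn_of_hasDerivWithinAt2_nonpos (convex_Icc 0 1)
    (f' := fun t => fderiv ℝ f (c t) (y - x) - C * ⟪c t, y - x⟫)
    (f'' := fun t => fderiv ℝ (fderiv ℝ f) (c t) (y - x) (y - x) - C * ‖y - x‖ ^ 2) ?_ ?_ ?_ ?_
  · exact ((hf.continuousOn.comp (AffineMap.lineMap_continuous.continuousOn)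
      fun t ht => hsW (hc t ht)).sub (by fun_prop))
  · rw [interior_Icc]
    intro t ht
    have hct := hsW (hc t (Ioo_subset_Icc_self ht))
    have := ((hf1 _ hct).hasFDerivAt.comp_hasDerivAt t (hc' t)).sub
      (((hc' t).norm_sq).const_mul (C / 2))
    refine (this.congr_deriv ?_).hasDerivWithinAt
    ring
  · rw [interior_Icc]
    intro t ht
    have hct := hsW (hc t (Ioo_subset_Icc_self ht))
    have := (((hf2 _ hct).hasFDerivAt.comp_hasDerivAt t (hc' t)).clm_apply
      (hasDerivAt_const t (y - x))).sub (((hc' t).inner ℝ (hasDerivAt_const t (y - x))).const_mul C)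
    refine (this.congr_deriv ?_).hasDerivWithinAt
    simp
  · rw [interior_Icc]
    intro t ht
    have hct := hc t (Ioo_subset_Icc_self ht)
    rw [sub_nonpos]
    calc fderiv ℝ (fderiv ℝ f) (c t) (y - x) (y - x)
        ≤ ‖fderiv ℝ (fderiv ℝ f) (c t)‖ * ‖y - x‖ * ‖y - x‖ :=
          (le_abs_self _).trans ((fderiv ℝ (fderiv ℝ f) (c t)).le_opNorm₂ _ _)
      _ ≤ C * ‖y - x‖ ^ 2 := by rw [mul_assoc, ← sq]; gcongr; exact hC _ hct

theorem ContDiffOn.exists_concaveOn_clm_comp_sub_mul_norm_sq {V : Type*} [NormedAddCommGroup V]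
    [NormedSpace ℝ V] {F : E → V} {W K : Set E} (hF : ContDiffOn ℝ 2 F W) (hW : IsOpen W)
    (hK : IsCompact K) (hKc : Convex ℝ K) (hKW : K ⊆ W) :
    ∃ B, ∀ (L : V →L[ℝ] ℝ) {R : ℝ}, 0 ≤ R → (∀ b, ‖L b‖ ≤ R * ‖b‖) →
      ConcaveOn ℝ K (fun x => L (F x) - R * B * ‖x‖ ^ 2) := by
  have hF1 : ContDiffOn ℝ 1 (fderiv ℝ F) W := hF.fderiv_of_isOpen hW (by norm_num)
  obtain ⟨C, hC⟩ := hK.exists_bound_of_continuousOn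
    ((hF1.continuousOn_fderiv_of_isOpen hW le_rfl).mono hKW)
  refine ⟨max C 0 / 2, fun L R hR hL => ?_⟩
  have hbound : ∀ x ∈ K, ‖fderiv ℝ (fderiv ℝ (L ∘ F)) x‖ ≤ R * max C 0 := fun x hx => by
    have hFx : ∀ᶠ y in 𝓝 x, DifferentiableAt ℝ F y :=
      eventually_of_mem (hW.mem_nhds (hKW hx)) fun y hy =>
        (hF.differentiableOn (by norm_num) y hy).differentiableAt (hW.mem_nhds hy)
    have hF1x : DifferentiableAt ℝ (fderiv ℝ F) x :=
      (hF1.differentiableOn (by norm_num) x (hKW hx)).differentiableAt (hW.mem_nhds (hKW hx))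
    calc ‖fderiv ℝ (fderiv ℝ (L ∘ F)) x‖ ≤ ‖L‖ * ‖fderiv ℝ (fderiv ℝ F) x‖ :=
          norm_fderiv_fderiv_clm_comp_le L hFx hF1x
      _ ≤ R * max C 0 := mul_le_mul (L.opNorm_le_bound hR hL)
          ((hC x hx).trans (le_max_left _ _)) (by positivity) hR
  simpa [mul_div_assoc] using
    concaveOn_sub_half_mul_norm_sq hW (L.contDiff.comp_contDiffOn hF) hKc hKW hbound

noncomputable def frameTrace {ι : Type*} [Fintype ι] (v : ι → E) :
    (E →L[ℝ] E →L[ℝ] ℝ) →L[ℝ] ℝ :=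
  ∑ i, (ContinuousLinearMap.apply ℝ ℝ (v i)).comp (ContinuousLinearMap.apply ℝ (E →L[ℝ] ℝ) (v i))

theorem frameTrace_apply {ι : Type*} [Fintype ι] (v : ι → E) (B : E →L[ℝ] E →L[ℝ] ℝ) :
    frameTrace v B = ∑ i, B (v i) (v i) := by
  simp [frameTrace]

theorem norm_frameTrace_apply_le {ι : Type*} [Fintype ι] {v : ι → E} (hv : ∀ i, ‖v i‖ = 1)
    (B : E →L[ℝ] E →L[ℝ] ℝ) : ‖frameTrace v B‖ ≤ Fintype.card ι * ‖B‖ := by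
  rw [frameTrace_apply]
  calc ‖∑ i, B (v i) (v i)‖ ≤ ∑ i, ‖B (v i) (v i)‖ := norm_sum_le _ _
    _ ≤ ∑ _i : ι, ‖B‖ := Finset.sum_le_sum fun i _ => by
        simpa [hv] using B.le_opNorm₂ (v i) (v i)
    _ = Fintype.card ι * ‖B‖ := by simp

end Semiconcave

section Hessian

variable {n : ℕ} {u : EuclideanSpace ℝ (Fin n) → ℝ} {x : EuclideanSpace ℝ (Fin n)}

theorem hessM_apply (hu : DifferentiableAt ℝ (fderiv ℝ u) x) (i j : Fin n) :
    hessM u x i j = fderiv ℝ (fderiv ℝ u) x (EuclideanSpace.single i 1)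
      (EuclideanSpace.single j 1) := by
  have hpd : ∀ (f : EuclideanSpace ℝ (Fin n) → ℝ) y (j : Fin n),
      pd f y j = fderiv ℝ f y (EuclideanSpace.single j 1) := fun f y j => dif_pos j.isLt
  simp only [hessM, Matrix.of_apply, hpd]
  rw [fderiv_clm_apply hu (differentiableAt_const _)]
  simp

theorem hessM_isHermitian (hu : ContDiffAt ℝ 2 u x) : (hessM u x).IsHermitian := by
  have hu' : DifferentiableAt ℝ (fderiv ℝ u) x :=
    (hu.fderiv_right (m := 1) (by norm_num)).differentiableAt (by norm_num)
  ext i j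
  simp only [Matrix.conjTranspose_apply, star_trivial, hessM_apply hu']
  exact hu.isSymmSndFDerivAt (by simp) _ _

theorem inner_toEuclideanLin_hessM (hu : DifferentiableAt ℝ (fderiv ℝ u) x)
    (v : EuclideanSpace ℝ (Fin n)) :
    ⟪v, (hessM u x).toEuclideanLin v⟫ = fderiv ℝ (fderiv ℝ u) x v v := by
  conv_rhs => rw [← (EuclideanSpace.basisFun (Fin n) ℝ).sum_repr v]
  simp [hessM_apply hu, PiLp.inner_apply, Matrix.mulVec, dotProduct, Finset.mul_sum,
    Finset.sum_mul]
  rw [Finset.sum_comm]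
  exact Finset.sum_congr rfl fun _ _ => Finset.sum_congr rfl fun _ _ => by ring

end Hessian

/-- let `U ⊂ ℝⁿ` be a bounded convex set and let `u` be `C⁴` on `Ū`
(formalized: `u` is `C⁴` on an open set `W` containing `closure U`).  If
`lam x 0 ≤ ⋯ ≤ lam x (n-1)` denote the eigenvalues of the Hessian `D²u(x)` in
increasing order (with multiplicity, encoded via the factorization of the
characteristic polynomial), then for each `1 ≤ k ≤ n` the function
`x ↦ λ₁(x) + ⋯ + λ_k(x)` is semi-concave on `Ū`: there is `M` with
`x ↦ ∑_{i<k} lam x i - M‖x‖²` concave on `closure U`. -/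
theorem sum_eigenvalues_semiConcave (n k : ℕ) (hk1 : 1 ≤ k) (hkn : k ≤ n)
    (U W : Set (EuclideanSpace ℝ (Fin n)))
    (hUb : Bornology.IsBounded U) (hUc : Convex ℝ U)
    (hW : IsOpen W) (hUW : closure U ⊆ W)
    (u : EuclideanSpace ℝ (Fin n) → ℝ) (hu : ContDiffOn ℝ 4 u W)
    (lam : EuclideanSpace ℝ (Fin n) → Fin n → ℝ)
    (hlam : ∀ x ∈ closure U, Monotone (lam x) ∧
      (hessM u x).charpoly = ∏ i, (Polynomial.X - Polynomial.C (lam x i))) :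
    ∃ M : ℝ, ConcaveOn ℝ (closure U)
      (fun x => (∑ i ∈ Finset.univ.filter (fun i : Fin n => (i : ℕ) < k), lam x i)
        - M * ‖x‖ ^ 2) := by
  have hu2 : ∀ x ∈ closure U, ContDiffAt ℝ 2 u x := fun x hx =>
    (hu.contDiffAt (hW.mem_nhds (hUW hx))).of_le (by norm_num)
  have hu2' : ∀ x ∈ closure U, DifferentiableAt ℝ (fderiv ℝ u) x := fun x hx =>
    ((hu2 x hx).fderiv_right (m := 1) (by norm_num)).differentiableAt (by norm_num)
  have heig : ∀ x ∈ closure U, ∃ e : OrthonormalBasis (Fin n) ℝ (EuclideanSpace ℝ (Fin n)),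
      ∀ i, (hessM u x).toEuclideanLin (e i) = lam x i • e i := fun x hx =>
    (hessM_isHermitian (hu2 x hx)).exists_orthonormalBasis_toEuclideanLin_eq_smul
      (hlam x hx).1 (hlam x hx).2
  obtain ⟨B, hB⟩ := ((hu.fderiv_of_isOpen hW (m := 3) (by norm_num)).fderiv_of_isOpen hW
    (m := 2) (by norm_num)).exists_concaveOn_clm_comp_sub_mul_norm_sq hW hUb.isCompact_closure
    hUc.closure hUW
  refine ⟨k * B, concaveOn_of_forall_le_of_exists_eq hUc.closure
    (f := fun (v : {v : Fin k → EuclideanSpace ℝ (Fin n) // Orthonormal ℝ v}) x =>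
      ∑ l, ⟪v.1 l, (hessM u x).toEuclideanLin (v.1 l)⟫ - k * B * ‖x‖ ^ 2) ?_ ?_ ?_⟩
  · rintro ⟨v, hv⟩
    refine (hB (frameTrace v) k.cast_nonneg (by simpa using norm_frameTrace_apply_le hv.1)).congr
      fun x hx => ?_
    simp [frameTrace_apply, inner_toEuclideanLin_hessM (hu2' x hx)]
  · rintro ⟨v, hv⟩ x hx
    obtain ⟨e, he⟩ := heig x hx
    simpa using sum_filter_lt_le_sum_inner_self_apply e he (hlam x hx).1 hk1 hkn hv
  · intro x hx
    obtain ⟨e, he⟩ := heig x hx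
    exact ⟨⟨_, e.orthonormal.comp _ (Fin.castLE_injective hkn)⟩,
      by simp [sum_inner_self_apply_castLE_eq e he hkn]⟩
end

section
/- For each 1 ≤ k ≤ n, the function σ : Symₙ(ℝ) → ℝ that sends a real symmetric n×n matrix A to the sum λ₁(A) + ⋯ + λ_k(A) of its k smallest eigenvalues (counted with multiplicity) is concave on Symₙ(ℝ). -/
/-!
Ky Fan's principle: the sum of the `k` smallest eigenvalues of a symmetric `A` is the minimum
of `tr (A P)` over the matrices `0 ≤ P ≤ 1` with `tr P = k`, attained at the spectral projection
onto the eigenvectors of the `k` smallest eigenvalues. A pointwise minimum of linear functions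
is concave; concretely, the projection chosen for `a • A + b • B` is admissible for `A` and `B`.
The lower bound is the discrete bathtub principle applied to the eigenvalues of `A` weighted by
the diagonal of `P` in an eigenbasis of `A`: these weights lie in `[0, 1]` and sum to `k`.
-/

open Finset Matrix Polynomial

theorem Finset.sum_le_sum_mul_of_threshold {ι R : Type*} [Fintype ι] [DecidableEq ι]
    [CommRing R] [LinearOrder R] [IsStrictOrderedRing R]
    {s : Finset ι} {f c : ι → R} {t : R} (hs : ∀ i ∈ s, f i ≤ t) (hsc : ∀ i ∉ s, t ≤ f i)
    (hc0 : ∀ i, 0 ≤ c i) (hc1 : ∀ i, c i ≤ 1) (hc : ∑ i, c i = #s) :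
    ∑ i ∈ s, f i ≤ ∑ i, c i * f i := by
  have hterm : ∀ i, 0 ≤ (c i - if i ∈ s then 1 else 0) * (f i - t) := by
    intro i
    split_ifs with hi
    · exact mul_nonneg_of_nonpos_of_nonpos (by linarith [hc1 i]) (by linarith [hs i hi])
    · exact mul_nonneg (by linarith [hc0 i]) (by linarith [hsc i hi])
  have hexpand : ∑ i, (c i - if i ∈ s then 1 else 0) * (f i - t)
      = ∑ i, c i * f i - ∑ i ∈ s, f i := by
    simp only [sub_mul, mul_sub, Finset.sum_sub_distrib, ite_mul, one_mul, zero_mul,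
      Finset.sum_ite_mem, Finset.univ_inter, ← Finset.sum_mul, hc, Finset.sum_const,
      nsmul_eq_mul]
    ring
  exact sub_nonneg.mp (hexpand ▸ Fintype.sum_nonneg hterm)

namespace Matrix

variable {ι : Type*} [Fintype ι] [DecidableEq ι]

theorem trace_star_mul_mul_unitary {R : Type*} [CommRing R] [StarRing R]
    (U : unitaryGroup ι R) (P : Matrix ι ι R) :
    (star (U : Matrix ι ι R) * P * U).trace = P.trace := by
  rw [trace_mul_cycle, (Unitary.mem_iff.mp U.2).2, one_mul]

namespace IsHermitian

section

variable {A : Matrix ι ι ℝ} (hA : A.IsHermitian)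

theorem trace_mul_eq_sum_mul_eigenvalues (P : Matrix ι ι ℝ) :
    (A * P).trace = ∑ i, (star (hA.eigenvectorUnitary : Matrix ι ι ℝ) * P *
      hA.eigenvectorUnitary) i i * hA.eigenvalues i := by
  conv_lhs => rw [hA.spectral_theorem, Unitary.conjStarAlgAut_apply]
  rw [Matrix.mul_assoc (_ * _), trace_mul_comm, ← Matrix.mul_assoc]
  simp [trace, mul_diagonal]

theorem sum_eigenvalues_le_trace_mul {s : Finset ι} {t : ℝ}
    (hs : ∀ i ∈ s, hA.eigenvalues i ≤ t) (hsc : ∀ i ∉ s, t ≤ hA.eigenvalues i)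
    {P : Matrix ι ι ℝ} (hP : P.PosSemidef) (hP1 : (1 - P).PosSemidef) (htr : P.trace = #s) :
    ∑ i ∈ s, hA.eigenvalues i ≤ (A * P).trace := by
  set U := hA.eigenvectorUnitary
  have hQ : (star (U : Matrix ι ι ℝ) * P * U).PosSemidef :=
    (IsUnit.posSemidef_star_left_conjugate_iff Unitary.isUnit_coe).mpr hP
  have hQ1 : (1 - star (U : Matrix ι ι ℝ) * P * U).PosSemidef := by
    rw [← IsUnit.posSemidef_star_left_conjugate_iff (Unitary.isUnit_coe (U := U))] at hP1
    rwa [Matrix.mul_sub, Matrix.sub_mul, Matrix.mul_one, Unitary.coe_star_mul_self] at hP1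
  rw [hA.trace_mul_eq_sum_mul_eigenvalues]
  refine sum_le_sum_mul_of_threshold hs hsc (fun i => hQ.diag_nonneg) (fun i => ?_) ?_
  · simpa using hQ1.diag_nonneg (i := i)
  · exact (trace_star_mul_mul_unitary U P).trans htr

noncomputable def eigenprojection (s : Finset ι) : Matrix ι ι ℝ :=
  (hA.eigenvectorUnitary : Matrix ι ι ℝ) * diagonal (fun i => if i ∈ s then 1 else 0) *
    star (hA.eigenvectorUnitary : Matrix ι ι ℝ)

theorem star_mul_eigenprojection_mul (s : Finset ι) :
    star (hA.eigenvectorUnitary : Matrix ι ι ℝ) * hA.eigenprojection s *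
      (hA.eigenvectorUnitary : Matrix ι ι ℝ) =
      diagonal (fun i => if i ∈ s then 1 else 0) := by
  simp only [eigenprojection, ← Matrix.mul_assoc, Unitary.coe_star_mul_self, Matrix.one_mul]
  rw [Matrix.mul_assoc, Unitary.coe_star_mul_self, Matrix.mul_one]

theorem posSemidef_eigenprojection (s : Finset ι) : (hA.eigenprojection s).PosSemidef := by
  refine (IsUnit.posSemidef_star_right_conjugate_iff Unitary.isUnit_coe).mpr
    (PosSemidef.diagonal fun i => ?_)
  positivity

theorem posSemidef_one_sub_eigenprojection (s : Finset ι) :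
    (1 - hA.eigenprojection s).PosSemidef := by
  rw [← IsUnit.posSemidef_star_left_conjugate_iff
      (Unitary.isUnit_coe (U := hA.eigenvectorUnitary)),
    Matrix.mul_sub, Matrix.sub_mul, Matrix.mul_one, Unitary.coe_star_mul_self,
    star_mul_eigenprojection_mul, ← diagonal_one, diagonal_sub]
  refine PosSemidef.diagonal fun i => ?_
  simp only [Pi.zero_apply]
  split_ifs <;> norm_num

theorem trace_eigenprojection (s : Finset ι) : (hA.eigenprojection s).trace = #s := by
  rw [← trace_star_mul_mul_unitary hA.eigenvectorUnitary, star_mul_eigenprojection_mul,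
    trace_diagonal, sum_boole, filter_mem_eq_inter, univ_inter]

theorem trace_mul_eigenprojection (s : Finset ι) :
    (A * hA.eigenprojection s).trace = ∑ i ∈ s, hA.eigenvalues i := by
  rw [hA.trace_mul_eq_sum_mul_eigenvalues, star_mul_eigenprojection_mul]
  simp [ite_mul, sum_ite_mem]

end

section

variable {n : ℕ} {A : Matrix (Fin n) (Fin n) ℝ} (hA : A.IsHermitian)

theorem charpoly_eq_prod_sort :
    A.charpoly = ∏ i, (X - C ((hA.eigenvalues ∘ Tuple.sort hA.eigenvalues) i)) := by
  rw [hA.charpoly_eq]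
  exact (Equiv.prod_comp _ (fun i => X - C (hA.eigenvalues i))).symm

noncomputable def smallestEigenindices (k : ℕ) : Finset (Fin n) :=
  ({i | (i : ℕ) < k} : Finset (Fin n)).map (Tuple.sort hA.eigenvalues).toEmbedding

theorem mem_smallestEigenindices {k : ℕ} {i : Fin n} :
    i ∈ hA.smallestEigenindices k ↔ ((Tuple.sort hA.eigenvalues).symm i : ℕ) < k := by
  simp [smallestEigenindices, mem_map_equiv]

theorem card_smallestEigenindices {k : ℕ} (hkn : k ≤ n) : #(hA.smallestEigenindices k) = k := by
  rw [smallestEigenindices, card_map, Fin.card_filter_val_lt, min_eq_right hkn]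

theorem sum_eigenvalues_smallestEigenindices (k : ℕ) :
    ∑ i ∈ hA.smallestEigenindices k, hA.eigenvalues i =
      ∑ i ∈ univ.filter (fun i : Fin n => (i : ℕ) < k),
        (hA.eigenvalues ∘ Tuple.sort hA.eigenvalues) i :=
  sum_map _ _ _

theorem sum_smallestEigenindices_le_trace_mul {k : ℕ} (hk1 : 1 ≤ k) (hkn : k ≤ n)
    {P : Matrix (Fin n) (Fin n) ℝ} (hP : P.PosSemidef) (hP1 : (1 - P).PosSemidef)
    (htr : P.trace = k) :
    ∑ i ∈ hA.smallestEigenindices k, hA.eigenvalues i ≤ (A * P).trace := by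
  have hmono := Tuple.monotone_sort hA.eigenvalues
  have heig (i) : hA.eigenvalues i =
      (hA.eigenvalues ∘ Tuple.sort hA.eigenvalues) ((Tuple.sort hA.eigenvalues).symm i) := by
    simp
  refine hA.sum_eigenvalues_le_trace_mul
    (t := hA.eigenvalues (Tuple.sort hA.eigenvalues ⟨k - 1, by omega⟩))
    (fun i hi => ?_) (fun i hi => ?_) hP hP1 (by rw [htr, hA.card_smallestEigenindices hkn])
    <;> rw [mem_smallestEigenindices] at hi <;> rw [heig i]
  · exact hmono (Fin.le_def.mpr (by simp only; omega))
  · exact hmono (Fin.le_def.mpr (by simp only; omega))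

end

end IsHermitian

end Matrix

/-- For each `1 ≤ k ≤ n`, the function `σ` sending a real symmetric `n × n`
matrix `A` to the sum of its `k` smallest eigenvalues (counted with multiplicity) is
concave on the set of symmetric matrices.  The function `σ` is pinned down by the
hypothesis `hσ`: whenever `lam : Fin n → ℝ` lists the eigenvalues of `A` in increasing
order with multiplicity (equivalently, `lam` is monotone and the characteristic
polynomial of `A` factors as `∏ i, (X - C (lam i))`), we have
`σ A = ∑_{i < k} lam i`. -/
theorem sum_smallest_eigenvalues_concave (n k : ℕ) (hk1 : 1 ≤ k) (hkn : k ≤ n)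
    (σ : Matrix (Fin n) (Fin n) ℝ → ℝ)
    (hσ : ∀ (A : Matrix (Fin n) (Fin n) ℝ) (lam : Fin n → ℝ), Monotone lam →
      A.charpoly = ∏ i, (Polynomial.X - Polynomial.C (lam i)) →
      σ A = ∑ i ∈ Finset.univ.filter (fun i : Fin n => (i : ℕ) < k), lam i) :
    ConcaveOn ℝ {A : Matrix (Fin n) (Fin n) ℝ | A.IsSymm} σ := by
  have hσ_eq (A : Matrix (Fin n) (Fin n) ℝ) (hA : A.IsHermitian) :
      σ A = ∑ i ∈ hA.smallestEigenindices k, hA.eigenvalues i :=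
    (hσ A _ (Tuple.monotone_sort _) hA.charpoly_eq_prod_sort).trans
      (hA.sum_eigenvalues_smallestEigenindices k).symm
  have hconvex : Convex ℝ {A : Matrix (Fin n) (Fin n) ℝ | A.IsSymm} :=
    fun A hA B hB a b _ _ _ => (hA.smul a).add (hB.smul b)
  refine ⟨hconvex, fun A hA B hB a b ha hb hab => ?_⟩
  have hC : (a • A + b • B).IsHermitian :=
    isHermitian_iff_isSymm.mpr (hconvex hA hB ha hb hab)
  set P := hC.eigenprojection (hC.smallestEigenindices k)
  have hPtrace : P.trace = k := by
    rw [hC.trace_eigenprojection, hC.card_smallestEigenindices hkn]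
  have hσ_le (M : Matrix (Fin n) (Fin n) ℝ) (hM : M.IsHermitian) : σ M ≤ (M * P).trace :=
    (hσ_eq M hM).trans_le (hM.sum_smallestEigenindices_le_trace_mul hk1 hkn
      (hC.posSemidef_eigenprojection _) (hC.posSemidef_one_sub_eigenprojection _) hPtrace)
  calc a • σ A + b • σ B
      ≤ a * (A * P).trace + b * (B * P).trace := by
        simp only [smul_eq_mul]
        gcongr
        exacts [hσ_le A (isHermitian_iff_isSymm.mpr hA), hσ_le B (isHermitian_iff_isSymm.mpr hB)]
    _ = ((a • A + b • B) * P).trace := by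
        rw [Matrix.add_mul, trace_add, smul_mul, smul_mul, trace_smul, trace_smul, smul_eq_mul,
          smul_eq_mul]
    _ = σ (a • A + b • B) := by rw [hσ_eq _ hC, hC.trace_mul_eigenprojection]
end

section
/- Let ℓ ≥ 1, let ε > 0, let λ₁, …, λ_ℓ be nonnegative real numbers, and let v₁, …, v_ℓ ∈ ℝⁿ. For k = 1, …, ℓ set Q_k = Σ_{i=1}^{k} (k+1−i) λ_i = λ_k + 2λ_{k−1} + ⋯ + kλ₁ and w_k = Σ_{i=1}^{k} (k+1−i) v_i. Then there is a constant C depending only on ℓ such that Σ_{k=1}^{ℓ} (Q_k + ε)^{−1/2} Σ_{i=1}^{k} |v_i| ≤ C Σ_{k=1}^{ℓ} (Q_k + ε)^{−1/2} |w_k|, where |·| denotes the Euclidean norm on ℝⁿ. -/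
/-!
Write `w_k = ∑_{i<k} (k - i) v_i` and `s_k = ∑_{i<k} v_i`. Then `s_{k+1} = w_{k+1} - w_k` and
`v_i = s_{i+1} - s_i`, so each `v_i` is a second difference of `w`, and
`∑_{i<k} |v_i| ≤ 4 ∑_{j≤k} |w_j|`. Since the `λ_i` are nonnegative, `Q_k` increases with `k`, so
the weight `(Q_k + ε)^{-1/2}` decreases: the weight of `∑_{i<k} |v_i|` is at most the weight of
every `|w_j|` with `j ≤ k`. Summing over `k ≤ ℓ` gives the inequality with `C = 4ℓ`.
-/

open Finset

section SecondPartialSum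

variable {M : Type*} [AddCommGroup M] [Module ℝ M]

/-- The paper's `Q_k` and `w_k` are `secondPartialSum λ k` and `secondPartialSum v k`,
indexed from `0`. -/
noncomputable def secondPartialSum (v : ℕ → M) (k : ℕ) : M :=
  ∑ i ∈ range k, ((k - i : ℕ) : ℝ) • v i

@[simp]
theorem secondPartialSum_zero (v : ℕ → M) : secondPartialSum v 0 = 0 := by
  simp [secondPartialSum]

theorem secondPartialSum_succ (v : ℕ → M) (k : ℕ) :
    secondPartialSum v (k + 1) = secondPartialSum v k + ∑ i ∈ range (k + 1), v i := by
  have hlast : secondPartialSum v k = ∑ i ∈ range (k + 1), ((k - i : ℕ) : ℝ) • v i := by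
    simp [secondPartialSum, sum_range_succ]
  rw [hlast, ← sum_add_distrib, secondPartialSum]
  refine sum_congr rfl fun i hi => ?_
  rw [Nat.sub_add_comm (mem_range_succ_iff.mp hi), Nat.cast_succ, add_smul, one_smul]

theorem secondPartialSum_le_of_le {lam : ℕ → ℝ} {j k : ℕ} (hlam : ∀ i < k, 0 ≤ lam i)
    (hjk : j ≤ k) : secondPartialSum lam j ≤ secondPartialSum lam k := by
  induction k, hjk using Nat.le_induction with
  | base => exact le_rfl
  | succ k _ ih =>
    rw [secondPartialSum_succ]
    have hsum : 0 ≤ ∑ i ∈ range (k + 1), lam i :=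
      sum_nonneg fun i hi => hlam i (mem_range.mp hi)
    linarith [ih fun i hi => hlam i (hi.trans (Nat.lt_succ_self k))]

end SecondPartialSum

theorem sum_norm_sub_le_two_mul_sum_norm {E : Type*} [SeminormedAddCommGroup E] (f : ℕ → E)
    (hf : f 0 = 0) (k : ℕ) :
    ∑ i ∈ range k, ‖f (i + 1) - f i‖ ≤ 2 * ∑ i ∈ range k, ‖f (i + 1)‖ := by
  have hprev : ∑ i ∈ range k, ‖f i‖ ≤ ∑ i ∈ range k, ‖f (i + 1)‖ := by
    calc ∑ i ∈ range k, ‖f i‖ ≤ ∑ i ∈ range (k + 1), ‖f i‖ :=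
          sum_le_sum_of_subset_of_nonneg (range_subset_range.mpr k.le_succ)
            fun _ _ _ => norm_nonneg _
      _ = ∑ i ∈ range k, ‖f (i + 1)‖ := by simp [sum_range_succ', hf]
  calc ∑ i ∈ range k, ‖f (i + 1) - f i‖ ≤ ∑ i ∈ range k, (‖f (i + 1)‖ + ‖f i‖) :=
        sum_le_sum fun i _ => norm_sub_le _ _
    _ ≤ 2 * ∑ i ∈ range k, ‖f (i + 1)‖ := by rw [sum_add_distrib]; linarith

theorem sum_norm_le_four_mul_sum_norm_secondPartialSum {E : Type*} [SeminormedAddCommGroup E]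
    [NormedSpace ℝ E] (v : ℕ → E) (k : ℕ) :
    ∑ i ∈ range k, ‖v i‖ ≤ 4 * ∑ j ∈ Icc 1 k, ‖secondPartialSum v j‖ := by
  set s : ℕ → E := fun j => ∑ i ∈ range j, v i
  have hv : ∀ i, v i = s (i + 1) - s i := fun i => (sum_range_succ_sub_sum v).symm
  have hs : ∀ j, s (j + 1) = secondPartialSum v (j + 1) - secondPartialSum v j := fun j => by
    rw [secondPartialSum_succ, add_sub_cancel_left]
  have hIcc : ∑ j ∈ Icc 1 k, ‖secondPartialSum v j‖ =
      ∑ i ∈ range k, ‖secondPartialSum v (i + 1)‖ := by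
    rw [range_eq_Ico, sum_Ico_add' (fun j => ‖secondPartialSum v j‖) 0 k 1]; rfl
  calc ∑ i ∈ range k, ‖v i‖ = ∑ i ∈ range k, ‖s (i + 1) - s i‖ := by simp only [← hv]
    _ ≤ 2 * ∑ i ∈ range k, ‖s (i + 1)‖ := sum_norm_sub_le_two_mul_sum_norm s (by simp [s]) k
    _ = 2 * ∑ i ∈ range k, ‖secondPartialSum v (i + 1) - secondPartialSum v i‖ := by simp only [hs]
    _ ≤ 2 * (2 * ∑ i ∈ range k, ‖secondPartialSum v (i + 1)‖) := by
        gcongr; exact sum_norm_sub_le_two_mul_sum_norm _ (secondPartialSum_zero v) k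
    _ = 4 * ∑ j ∈ Icc 1 k, ‖secondPartialSum v j‖ := by rw [hIcc]; ring

theorem sum_mul_le_of_le_sum_of_antitoneOn {r a b : ℕ → ℝ} {c : ℝ} {ℓ : ℕ}
    (hr : AntitoneOn r (Icc 1 ℓ)) (hr₀ : ∀ k, 0 ≤ r k) (hb : ∀ k, 0 ≤ b k)
    (hab : ∀ k ∈ Icc 1 ℓ, a k ≤ c * ∑ j ∈ Icc 1 k, b j) (hc : 0 ≤ c) :
    ∑ k ∈ Icc 1 ℓ, r k * a k ≤ c * ℓ * ∑ k ∈ Icc 1 ℓ, r k * b k := by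
  have hterm : ∀ k ∈ Icc 1 ℓ, r k * a k ≤ c * ∑ k ∈ Icc 1 ℓ, r k * b k := fun k hk => by
    have hkℓ := (mem_Icc.mp hk).2
    calc r k * a k ≤ r k * (c * ∑ j ∈ Icc 1 k, b j) := mul_le_mul_of_nonneg_left (hab k hk) (hr₀ k)
      _ = c * ∑ j ∈ Icc 1 k, r k * b j := by rw [mul_left_comm, mul_sum]
      _ ≤ c * ∑ j ∈ Icc 1 k, r j * b j := mul_le_mul_of_nonneg_left (sum_le_sum fun j hj =>
          mul_le_mul_of_nonneg_right (hr (Icc_subset_Icc_right hkℓ hj) hk (mem_Icc.mp hj).2)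
            (hb j)) hc
      _ ≤ c * ∑ j ∈ Icc 1 ℓ, r j * b j := mul_le_mul_of_nonneg_left (sum_le_sum_of_subset_of_nonneg
          (Icc_subset_Icc_right hkℓ) fun j _ _ => mul_nonneg (hr₀ j) (hb j)) hc
  calc ∑ k ∈ Icc 1 ℓ, r k * a k ≤ #(Icc 1 ℓ) • (c * ∑ k ∈ Icc 1 ℓ, r k * b k) :=
        sum_le_card_nsmul _ _ _ hterm
    _ = c * ℓ * ∑ k ∈ Icc 1 ℓ, r k * b k := by rw [Nat.card_Icc, add_tsub_cancel_right, nsmul_eq_mul]; ring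

/-- the pointwise gradient inequality (4.1).  For `ℓ ≥ 1` there is a
constant `C` depending only on `ℓ` such that for all `ε > 0`, all nonnegative reals
`λ₁, …, λ_ℓ` and all vectors `v₁, …, v_ℓ ∈ ℝⁿ`, writing (with 0-based indexing)
`Q_k = ∑_{i<k} (k-i) λ_i` and `w_k = ∑_{i<k} (k-i) v_i` for `k = 1, …, ℓ`, one has
`∑_{k=1}^{ℓ} (Q_k + ε)^{-1/2} ∑_{i<k} |v_i| ≤ C ∑_{k=1}^{ℓ} (Q_k + ε)^{-1/2} |w_k|`. -/
theorem gradient_inequality (ℓ : ℕ) (hℓ : 1 ≤ ℓ) :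
    ∃ C : ℝ, 0 < C ∧
      ∀ (n : ℕ) (ε : ℝ), 0 < ε →
      ∀ (lam : ℕ → ℝ), (∀ i < ℓ, 0 ≤ lam i) →
      ∀ (v : ℕ → EuclideanSpace ℝ (Fin n)),
        ∑ k ∈ Finset.Icc 1 ℓ,
            (Real.sqrt ((∑ i ∈ Finset.range k, ((k - i : ℕ) : ℝ) * lam i) + ε))⁻¹ *
              ∑ i ∈ Finset.range k, ‖v i‖
          ≤ C * ∑ k ∈ Finset.Icc 1 ℓ,
              (Real.sqrt ((∑ i ∈ Finset.range k, ((k - i : ℕ) : ℝ) * lam i) + ε))⁻¹ *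
                ‖∑ i ∈ Finset.range k, ((k - i : ℕ) : ℝ) • v i‖ := by
  refine ⟨4 * ℓ, by positivity, fun n ε hε lam hlam v => ?_⟩
  have hQ : ∀ {j k}, j ≤ k → k ≤ ℓ → secondPartialSum lam j ≤ secondPartialSum lam k :=
    fun hjk hkℓ => secondPartialSum_le_of_le (fun i hi => hlam i (hi.trans_le hkℓ)) hjk
  have hweight : AntitoneOn (fun k => (√(secondPartialSum lam k + ε))⁻¹) (Icc 1 ℓ) :=
    fun j _ k hk hjk => by
      have hQj : 0 ≤ secondPartialSum lam j :=
        secondPartialSum_zero lam ▸ hQ (Nat.zero_le j) (hjk.trans (mem_Icc.mp hk).2)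
      exact inv_anti₀ (by positivity) (Real.sqrt_le_sqrt (by linarith [hQ hjk (mem_Icc.mp hk).2]))
  -- on `ℝ`, `•` is `*`, so the goal is stated in terms of `secondPartialSum` up to unfolding
  exact sum_mul_le_of_le_sum_of_antitoneOn hweight (fun _ => by positivity) (fun _ => norm_nonneg _)
    (fun k _ => sum_norm_le_four_mul_sum_norm_secondPartialSum v k) (by norm_num)
end
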